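/- Let u₀ be a nonvanishing solution of Δ(p(n-1)Δu(n-1)) + q(n)u(n) = 0, with p nonvanishing. Define u₁(n) = u₀(n) Σ_{k=0}^{K(n)} λ^k X^{(2k)}(n), where K(n) = n - n₀ - 1 for n > n₀ and K(n) = n₀ - n for n ≤ n₀, and the X^{(2k)} are defined by the recursive indefinite-sum relations from u₀, p, r at base point n₀. Then u₁ solves Δ(p(n-1)Δu(n-1)) + q(n)u(n) = λ r(n) u(n) for all n. -/

import Mathlib

/-- The indefinite sum of `f` vanishing at `n₀`. -/
noncomputable def istar (n₀ : ℤ) (f : ℤ → ℂ) (n : ℤ) : ℂ :=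
  if n₀ ≤ n then ∑ j ∈ Finset.Ico n₀ n, f j else -∑ j ∈ Finset.Ico n n₀, f j

/-- The sequences `X⁽ⁱ⁾`: `X⁽⁰⁾ = 1`, even steps sum `X⁽ⁱ⁻¹⁾(s)/(p(s)u₀(s)u₀(s+1))`,
odd steps sum `u₀(s+1)² X⁽ⁱ⁻¹⁾(s+1) r(s+1)`. -/
noncomputable def Xseq (u₀ p r : ℤ → ℂ) (n₀ : ℤ) : ℕ → ℤ → ℂ
  | 0 => fun _ => 1
  | i + 1 =>
      if (i + 1) % 2 = 0 then
        istar n₀ (fun s => Xseq u₀ p r n₀ i s / (p s * u₀ s * u₀ (s + 1)))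
      else
        istar n₀ (fun s => u₀ (s + 1) ^ 2 * Xseq u₀ p r n₀ i (s + 1) * r (s + 1))

/-- The sequences `Y⁽ⁱ⁾`: `Y⁽⁰⁾ = 1`, with the parity roles exchanged. -/
noncomputable def Yseq (u₀ p r : ℤ → ℂ) (n₀ : ℤ) : ℕ → ℤ → ℂ
  | 0 => fun _ => 1
  | i + 1 =>
      if (i + 1) % 2 = 0 then
        istar n₀ (fun s => u₀ (s + 1) ^ 2 * Yseq u₀ p r n₀ i (s + 1) * r (s + 1))
      else
        istar n₀ (fun s => Yseq u₀ p r n₀ i s / (p s * u₀ s * u₀ (s + 1)))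

/-! Write `L u(n) = p(n) Δu(n) - p(n-1) Δu(n-1) + q(n) u(n)`. Since `L u₀ = 0`, `L` factors
through `u₀` (Pólya): `L (u₀ y)(n) = p(n) u₀(n+1) Δy(n) - p(n-1) u₀(n-1) Δy(n-1)`. As the
`X⁽ⁱ⁾` are iterated indefinite sums, this gives `L (u₀ X⁽²ᵏ⁺²⁾) = r u₀ X⁽²ᵏ⁾`, so `L` maps
`u₀ Σ_{k ≤ N} λᵏ X⁽²ᵏ⁾` to `λ r u₀ Σ_{k < N} λᵏ X⁽²ᵏ⁾`. Moreover `X⁽²ᵏ⁺²⁾` vanishes on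
`[n₀ - k, n₀ + k + 1]`, so near any `n` the truncation at `K(n)` may be replaced by one at a
large fixed `N`, where both partial sums agree with `u₁`. -/

open Finset

lemma istar_succ (n₀ : ℤ) (f : ℤ → ℂ) (n : ℤ) :
    istar n₀ f (n + 1) = istar n₀ f n + f n := by
  unfold istar
  rcases le_or_gt n₀ n with h | h
  · rw [if_pos h, if_pos (by omega), ← insert_Ico_right_eq_Ico_add_one h,
      sum_insert (by simp), add_comm]
  · rw [if_neg (by omega : ¬n₀ ≤ n), ← insert_Ico_add_one_left_eq_Ico h,
      sum_insert (by simp)]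
    split_ifs with h'
    · rw [show n₀ = n + 1 by omega]; simp
    · ring

lemma istar_eqOn_zero {n₀ a b : ℤ} {f : ℤ → ℂ} (ha : a ≤ n₀) (hb : n₀ ≤ b)
    (hf : Set.EqOn f 0 (Set.Ico a b)) : Set.EqOn (istar n₀ f) 0 (Set.Icc a b) := by
  intro n ⟨han, hnb⟩
  unfold istar
  split_ifs
  · exact sum_eq_zero fun s hs => hf (by simp only [mem_Ico] at hs; constructor <;> omega)
  · rw [sum_eq_zero fun s hs => hf (by simp only [mem_Ico] at hs; constructor <;> omega)]
    simp

section Xseq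

variable (u₀ p r : ℤ → ℂ) (n₀ : ℤ)

lemma Xseq_two_mul_add_one (k : ℕ) :
    Xseq u₀ p r n₀ (2 * k + 1) =
      istar n₀ (fun s => u₀ (s + 1) ^ 2 * Xseq u₀ p r n₀ (2 * k) (s + 1) * r (s + 1)) := by
  rw [Xseq, if_neg (by omega)]

lemma Xseq_two_mul_add_two (k : ℕ) :
    Xseq u₀ p r n₀ (2 * k + 2) =
      istar n₀ (fun s => Xseq u₀ p r n₀ (2 * k + 1) s / (p s * u₀ s * u₀ (s + 1))) := by
  rw [Xseq, if_pos (by omega)]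

lemma Xseq_two_mul_succ_eqOn_zero (k : ℕ) :
    Set.EqOn (Xseq u₀ p r n₀ (2 * (k + 1))) 0 (Set.Icc (n₀ - k) (n₀ + k + 1)) := by
  rw [mul_add_one]
  have odd_step : ∀ k : ℕ, Set.EqOn (Xseq u₀ p r n₀ (2 * k)) 0 (Set.Ioc (n₀ - k) (n₀ + k)) →
      Set.EqOn (Xseq u₀ p r n₀ (2 * k + 1)) 0 (Set.Icc (n₀ - k) (n₀ + k)) := by
    intro k hk
    rw [Xseq_two_mul_add_one]
    refine istar_eqOn_zero (by omega) (by omega) fun s ⟨hs₁, hs₂⟩ => ?_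
    simp [hk (show s + 1 ∈ Set.Ioc _ _ from ⟨by omega, by omega⟩)]
  have even_step : ∀ k : ℕ, Set.EqOn (Xseq u₀ p r n₀ (2 * k + 1)) 0 (Set.Icc (n₀ - k) (n₀ + k)) →
      Set.EqOn (Xseq u₀ p r n₀ (2 * k + 2)) 0 (Set.Icc (n₀ - k) (n₀ + k + 1)) := by
    intro k hk
    rw [Xseq_two_mul_add_two]
    refine istar_eqOn_zero (by omega) (by omega) fun s ⟨hs₁, hs₂⟩ => ?_
    simp [hk (show s ∈ Set.Icc _ _ from ⟨by omega, by omega⟩)]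
  induction k with
  | zero => exact even_step 0 (odd_step 0 fun s ⟨h₁, h₂⟩ => by simp at h₁ h₂; omega)
  | succ k ih =>
    refine even_step _ (odd_step _ fun s ⟨h₁, h₂⟩ => ih ⟨?_, ?_⟩) <;> push_cast at h₁ h₂ <;> omega

end Xseq

section JacobiOp

variable {R : Type*} [CommRing R]

def jacobiOp (p q u : ℤ → R) (n : ℤ) : R :=
  p n * (u (n + 1) - u n) - p (n - 1) * (u n - u (n - 1)) + q n * u n

variable (p q : ℤ → R)

lemma jacobiOp_add (u v : ℤ → R) (n : ℤ) :
    jacobiOp p q (u + v) n = jacobiOp p q u n + jacobiOp p q v n := by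
  simp only [jacobiOp, Pi.add_apply]; ring

lemma jacobiOp_smul (c : R) (u : ℤ → R) (n : ℤ) :
    jacobiOp p q (c • u) n = c * jacobiOp p q u n := by
  simp only [jacobiOp, Pi.smul_apply, smul_eq_mul]; ring

lemma jacobiOp_congr {u v : ℤ → R} {n : ℤ} (hprev : u (n - 1) = v (n - 1)) (hcurr : u n = v n)
    (hnext : u (n + 1) = v (n + 1)) : jacobiOp p q u n = jacobiOp p q v n := by
  simp only [jacobiOp, hprev, hcurr, hnext]

lemma jacobiOp_mul {u : ℤ → R} {n : ℤ} (hu : jacobiOp p q u n = 0) (y : ℤ → R) :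
    jacobiOp p q (u * y) n =
      p n * u (n + 1) * (y (n + 1) - y n) - p (n - 1) * u (n - 1) * (y n - y (n - 1)) := by
  simp only [jacobiOp, Pi.mul_apply] at hu ⊢
  linear_combination y n * hu

end JacobiOp

section Series

variable {u₀ p r : ℤ → ℂ} {n₀ : ℤ}

lemma jacobiOp_mul_Xseq_two_mul_succ (q : ℤ → ℂ) (hp : ∀ n, p n ≠ 0)
    (hu₀ : ∀ n, u₀ n ≠ 0) (hsol : ∀ n, jacobiOp p q u₀ n = 0) (k : ℕ) (n : ℤ) :
    jacobiOp p q (u₀ * Xseq u₀ p r n₀ (2 * (k + 1))) n =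
      r n * (u₀ n * Xseq u₀ p r n₀ (2 * k) n) := by
  have hΔeven : ∀ m, Xseq u₀ p r n₀ (2 * (k + 1)) (m + 1) - Xseq u₀ p r n₀ (2 * (k + 1)) m =
      Xseq u₀ p r n₀ (2 * k + 1) m / (p m * u₀ m * u₀ (m + 1)) := fun m => by
    rw [mul_add_one, Xseq_two_mul_add_two, istar_succ, add_sub_cancel_left]
  have hΔodd : ∀ m, Xseq u₀ p r n₀ (2 * k + 1) (m + 1) - Xseq u₀ p r n₀ (2 * k + 1) m =
      u₀ (m + 1) ^ 2 * Xseq u₀ p r n₀ (2 * k) (m + 1) * r (m + 1) := fun m => by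
    rw [Xseq_two_mul_add_one, istar_succ, add_sub_cancel_left]
  have hΔeven' := hΔeven (n - 1)
  have hΔodd' := hΔodd (n - 1)
  rw [sub_add_cancel] at hΔeven' hΔodd'
  rw [jacobiOp_mul p q (hsol n), hΔeven, hΔeven']
  have := hp n; have := hp (n - 1); have := hu₀ n; have := hu₀ (n - 1); have := hu₀ (n + 1)
  field_simp
  linear_combination hΔodd'

variable (u₀ p r n₀) in
noncomputable def truncatedSeries (lam : ℂ) (N : ℕ) (n : ℤ) : ℂ :=
  u₀ n * ∑ k ∈ range N, lam ^ k * Xseq u₀ p r n₀ (2 * k) n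

lemma truncatedSeries_succ (lam : ℂ) (N : ℕ) :
    truncatedSeries u₀ p r n₀ lam (N + 1) =
      truncatedSeries u₀ p r n₀ lam N + lam ^ N • (u₀ * Xseq u₀ p r n₀ (2 * N)) := by
  ext n
  simp only [truncatedSeries, sum_range_succ, Pi.add_apply, Pi.smul_apply, Pi.mul_apply,
    smul_eq_mul]
  ring

lemma jacobiOp_truncatedSeries_succ (q : ℤ → ℂ) (hp : ∀ n, p n ≠ 0)
    (hu₀ : ∀ n, u₀ n ≠ 0) (hsol : ∀ n, jacobiOp p q u₀ n = 0) (lam : ℂ) (N : ℕ) (n : ℤ) :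
    jacobiOp p q (truncatedSeries u₀ p r n₀ lam (N + 1)) n =
      lam * r n * truncatedSeries u₀ p r n₀ lam N n := by
  induction N with
  | zero =>
    simpa [truncatedSeries, jacobiOp, Xseq] using hsol n
  | succ N ih =>
    rw [truncatedSeries_succ, jacobiOp_add, ih, jacobiOp_smul,
      jacobiOp_mul_Xseq_two_mul_succ q hp hu₀ hsol, truncatedSeries_succ]
    simp only [Pi.add_apply, Pi.smul_apply, Pi.mul_apply, smul_eq_mul]
    ring

lemma truncatedSeries_eq_of_le (lam : ℂ) {M N : ℕ} (hMN : M ≤ N) {n : ℤ}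
    (hn : n ∈ Set.Icc (n₀ + 1 - M) (n₀ + M)) :
    truncatedSeries u₀ p r n₀ lam M n = truncatedSeries u₀ p r n₀ lam N n := by
  obtain ⟨hn₁, hn₂⟩ := hn
  unfold truncatedSeries
  congr 1
  refine sum_subset (range_subset_range.2 hMN) fun k _ hk => ?_
  obtain ⟨j, rfl⟩ : ∃ j, k = j + 1 := ⟨k - 1, by simp at hk; omega⟩
  simp only [mem_range, not_lt] at hk
  rw [Xseq_two_mul_succ_eqOn_zero u₀ p r n₀ j ⟨by omega, by omega⟩, Pi.zero_apply, mul_zero]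

end Series

/-- Theorem 2, first solution: `u₁(n) = u₀(n) Σ_{k=0}^{K(n)} λᵏ X⁽²ᵏ⁾(n)` solves the
Jacobi equation with spectral parameter `λ`. -/
theorem u1_solves (u₀ p q r u₁ : ℤ → ℂ) (n₀ : ℤ) (lam : ℂ)
    (hp : ∀ n, p n ≠ 0) (hu₀ : ∀ n, u₀ n ≠ 0)
    (hsol : ∀ n : ℤ,
      p n * (u₀ (n + 1) - u₀ n) - p (n - 1) * (u₀ n - u₀ (n - 1)) + q n * u₀ n = 0)
    (hu₁ : ∀ n : ℤ, u₁ n = u₀ n *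
        ∑ k ∈ Finset.range (if n₀ < n then (n - n₀).toNat else (n₀ - n).toNat + 1),
          lam ^ k * Xseq u₀ p r n₀ (2 * k) n) :
    ∀ n : ℤ,
      p n * (u₁ (n + 1) - u₁ n) - p (n - 1) * (u₁ n - u₁ (n - 1)) + q n * u₁ n
        = lam * r n * u₁ n := by
  intro n
  have hu₁_eq : ∀ m : ℤ, ∀ N : ℕ, (m - n₀).natAbs + 1 ≤ N →
      u₁ m = truncatedSeries u₀ p r n₀ lam N m := fun m N hN =>
    (hu₁ m).trans <| truncatedSeries_eq_of_le lam (by split_ifs <;> omega)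
      (by split_ifs <;> constructor <;> omega)
  set N := (n - n₀).natAbs + 2
  calc jacobiOp p q u₁ n
      = jacobiOp p q (truncatedSeries u₀ p r n₀ lam (N + 1)) n :=
        jacobiOp_congr p q (hu₁_eq _ _ (by omega)) (hu₁_eq _ _ (by omega))
          (hu₁_eq _ _ (by omega))
    _ = lam * r n * truncatedSeries u₀ p r n₀ lam N n :=
        jacobiOp_truncatedSeries_succ q hp hu₀ hsol lam N n
    _ = lam * r n * u₁ n := by rw [hu₁_eq n N (by omega)]
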